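/- For the call-by-value xCL system extended with the auxiliary application operators ◐ and ∘: for every closed extended term t and every value v, t ⇓ v in the extended big-step semantics if and only if t →* v in the extended small-step semantics. -/

import Mathlib

/-!
Big-step evaluations are simulated by small-step reductions: each rule of `⇓` becomes a run of
congruence steps that evaluates its premises in place, followed by one `◐`/`∘` step or one labeled
transition. Conversely, `⇓` is closed under small-step head expansion, and every value evaluates
to itself, so any reduction `t →* v` to a value can be read backwards into a derivation of `t ⇓ v`.
-/

/-- Closed terms of xCL extended with the auxiliary application operators
`◐` (`half`) and `∘` (`comp`). -/
inductive Tm : Type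
  | S : Tm
  | K : Tm
  | I : Tm
  | S1 : Tm → Tm
  | K1 : Tm → Tm
  | S2 : Tm → Tm → Tm
  | app : Tm → Tm → Tm
  | half : Tm → Tm → Tm
  | comp : Tm → Tm → Tm

/-- Values: topmost constructor among `S, K, I, S', K', S''`. -/
def Tm.IsValue : Tm → Prop
  | .app _ _ => False
  | .half _ _ => False
  | .comp _ _ => False
  | _ => True

/-- Labeled value transitions `t ─s→ t'`. -/
inductive LStep : Tm → Tm → Tm → Prop
  | S (t : Tm) : LStep .S t (.S1 t)
  | S1 (t s : Tm) : LStep (.S1 t) s (.S2 t s)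
  | S2 (t s r : Tm) : LStep (.S2 t s) r (.app (.app t r) (.app s r))
  | K (t : Tm) : LStep .K t (.K1 t)
  | K1 (t s : Tm) : LStep (.K1 t) s t
  | I (t : Tm) : LStep .I t t

/-- Extended small-step unlabeled relation `→`. -/
inductive Step : Tm → Tm → Prop
  | appL {t t' : Tm} (s : Tm) : Step t t' → Step (.app t s) (.app t' s)
  | appV {s t : Tm} : s.IsValue → Step (.app s t) (.half s t)
  | halfR {t s s' : Tm} : Step s s' → Step (.half t s) (.half t s')
  | halfV {s t : Tm} : t.IsValue → Step (.half s t) (.comp s t)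
  | compL {t t' s : Tm} : Step t t' → Step (.comp t s) (.comp t' s)
  | compBeta {t s t' : Tm} : LStep t s t' → Step (.comp t s) t'

/-- Extended big-step semantics `t ⇓ v`. -/
inductive Big : Tm → Tm → Prop
  | val {v : Tm} : v.IsValue → Big v v
  | app {s t w v : Tm} : Big s w → Big (.half w t) v → Big (.app s t) v
  | half {s t w v : Tm} : Big t w → Big (.comp s w) v → Big (.half s t) v
  | compI {s t v : Tm} : Big s .I → Big t v → Big (.comp s t) v
  | compK {s t : Tm} : Big s .K → Big (.comp s t) (.K1 t)
  | compS {s t : Tm} : Big s .S → Big (.comp s t) (.S1 t)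
  | compK1 {s t r v : Tm} : Big s (.K1 r) → Big r v → Big (.comp s t) v
  | compS1 {s t r : Tm} : Big s (.S1 r) → Big (.comp s t) (.S2 r t)
  | compS2 {s t r q v : Tm} :
      Big s (.S2 r q) → Big (.app (.app r t) (.app q t)) v → Big (.comp s t) v

open Relation

theorem LStep.isValue {t s t' : Tm} (h : LStep t s t') : t.IsValue := by
  cases h <;> trivial

theorem Big.isValue {t v : Tm} (h : Big t v) : v.IsValue := by
  induction h <;> trivial

namespace Step

theorem reflTransGen_appL {t t' : Tm} (s : Tm) (h : ReflTransGen Step t t') :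
    ReflTransGen Step (.app t s) (.app t' s) :=
  h.lift (Tm.app · s) fun _ _ => appL s

theorem reflTransGen_halfR {s s' : Tm} (t : Tm) (h : ReflTransGen Step s s') :
    ReflTransGen Step (.half t s) (.half t s') :=
  h.lift (Tm.half t) fun _ _ => halfR

theorem reflTransGen_compL {t t' : Tm} (s : Tm) (h : ReflTransGen Step t t') :
    ReflTransGen Step (.comp t s) (.comp t' s) :=
  h.lift (Tm.comp · s) fun _ _ => compL

theorem reflTransGen_comp_of_lstep {s w t r v : Tm} (hs : ReflTransGen Step s w)
    (hl : LStep w t r) (hr : ReflTransGen Step r v) : ReflTransGen Step (.comp s t) v :=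
  ((reflTransGen_compL t hs).tail (compBeta hl)).trans hr

end Step

namespace Big

theorem reflTransGen {t v : Tm} (h : Big t v) : ReflTransGen Step t v := by
  induction h with
  | val _ => exact .refl
  | app hs _ ihs ihv =>
    exact ((Step.reflTransGen_appL _ ihs).tail (.appV hs.isValue)).trans ihv
  | half ht _ iht ihv =>
    exact ((Step.reflTransGen_halfR _ iht).tail (.halfV ht.isValue)).trans ihv
  | compI _ _ ihs ihv => exact Step.reflTransGen_comp_of_lstep ihs (.I _) ihv
  | compK _ ihs => exact Step.reflTransGen_comp_of_lstep ihs (.K _) .refl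
  | compS _ ihs => exact Step.reflTransGen_comp_of_lstep ihs (.S _) .refl
  | compK1 _ _ ihs ihv => exact Step.reflTransGen_comp_of_lstep ihs (.K1 _ _) ihv
  | compS1 _ ihs => exact Step.reflTransGen_comp_of_lstep ihs (.S1 _ _) .refl
  | compS2 _ _ ihs ihv => exact Step.reflTransGen_comp_of_lstep ihs (.S2 _ _ _) ihv

/-- The six `∘` rules of `⇓` are the single rule "evaluate the operator, then fire a labeled
transition and evaluate its target", unfolded along the six cases of `LStep`. -/
theorem comp_iff {s t v : Tm} :
    Big (.comp s t) v ↔ ∃ w r, Big s w ∧ LStep w t r ∧ Big r v := by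
  constructor
  · rintro (_ | _ | _ | ⟨hs, hv⟩ | hs | hs | ⟨hs, hv⟩ | hs | ⟨hs, hv⟩)
    · contradiction
    · exact ⟨_, _, hs, .I _, hv⟩
    · exact ⟨_, _, hs, .K _, .val trivial⟩
    · exact ⟨_, _, hs, .S _, .val trivial⟩
    · exact ⟨_, _, hs, .K1 _ _, hv⟩
    · exact ⟨_, _, hs, .S1 _ _, .val trivial⟩
    · exact ⟨_, _, hs, .S2 _ _ _, hv⟩
  · rintro ⟨w, r, hs, hl, hv⟩
    cases hl with
    | I => exact compI hs hv
    | K => cases hv; exact compK hs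
    | S => cases hv; exact compS hs
    | K1 => exact compK1 hs hv
    | S1 => cases hv; exact compS1 hs
    | S2 => exact compS2 hs hv

theorem of_step {t t' v : Tm} (hs : Step t t') (hb : Big t' v) : Big t v := by
  induction hs generalizing v with
  | appL _ _ ih =>
    cases hb with
    | val hv => contradiction
    | app h₁ h₂ => exact app (ih h₁) h₂
  | appV hs => exact app (val hs) hb
  | halfR _ ih =>
    cases hb with
    | val hv => contradiction
    | half h₁ h₂ => exact half (ih h₁) h₂
  | halfV ht => exact half (val ht) hb
  | compL _ ih =>
    obtain ⟨w, r, hw, hl, hr⟩ := comp_iff.mp hb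
    exact comp_iff.mpr ⟨w, r, ih hw, hl, hr⟩
  | compBeta hl => exact comp_iff.mpr ⟨_, _, val hl.isValue, hl, hb⟩

theorem of_reflTransGen {t v : Tm} (h : ReflTransGen Step t v) (hv : v.IsValue) : Big t v := by
  induction h using ReflTransGen.head_induction_on with
  | refl => exact val hv
  | head hs _ ih => exact of_step hs ih

end Big

/-- Big-step/small-step equivalence for the call-by-value xCL system extended
with the auxiliary application operators `◐` and `∘`. -/
theorem xCL_extended_big_iff_small (t v : Tm) (hv : v.IsValue) :
    Big t v ↔ Relation.ReflTransGen Step t v :=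
  ⟨Big.reflTransGen, fun h => Big.of_reflTransGen h hv⟩
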